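/- Let U : [−1,1] → ℝ be continuous, β > 0, h ∈ ℝ. For N ≥ 2 and σ ∈ {-1,1}^N set m̂_i(σ) := (1/N)·Σ_{j≠i} σ_j, and define the Hamiltonian H_N(σ) := −Σ_{i=1}^N σ_i·U(m̂_i(σ)) − h·Σ_{i=1}^N σ_i. Then lim_{N→∞} (1/N)·log Σ_{σ ∈ {-1,1}^N} exp(−β·H_N(σ)) = max_{m ∈ [−1,1]} [ β·m·U(m) + βh·m − g(m) ]. -/

import Mathlib

open Real Filter Finset

/-- The spin value ±1 associated to a Boolean. -/
noncomputable def spin (b : Bool) : ℝ := if b then 1 else -1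

/-- Minus the binary entropy as a function of the magnetization `m`:
`g(m) = ((1-m)/2) log((1-m)/2) + ((1+m)/2) log((1+m)/2)`
(with the convention `0·log 0 = 0`, automatic since `Real.log 0 = 0`). -/
noncomputable def gEntropy (m : ℝ) : ℝ :=
  ((1 - m) / 2) * Real.log ((1 - m) / 2) + ((1 + m) / 2) * Real.log ((1 + m) / 2)

/-- The general fully connected Hamiltonian with potential `U` of the empirical
magnetization of the remaining spins:
`H_N(σ) = -∑_i σ_i U(m̂_i(σ)) - h ∑_i σ_i`, `m̂_i(σ) = (1/N) ∑_{j≠i} σ_j`. -/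
noncomputable def hamFC {N : ℕ} (U : ℝ → ℝ) (h : ℝ) (σ : Fin N → Bool) : ℝ :=
  -(∑ i, spin (σ i) *
      U ((1 / (N : ℝ)) * ∑ j ∈ Finset.univ.erase i, spin (σ j)))
    - h * ∑ i, spin (σ i)

/-! The cavity fields `m̂_i(σ)` differ from the magnetization `m(σ)` by `1/N`, so by uniform
continuity of `U`, `-β H_N(σ) = N Φ(m(σ)) + o(N)` uniformly in `σ`, where
`Φ(m) = β m U(m) + β h m`. Up to a factor `e^{o(N)}` the partition function is therefore
`∑_k C(N,k) e^{N Φ(m_k)}` with `m_k = (2k - N)/N`, and Stirling's formula gives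
`log C(N,k) = -N g(m_k) + O(log N)`. On the logarithmic scale a sum of `N + 1` exponentials is
its largest term up to `log (N + 1)`, and the grid `m_k` is `2/N`-dense in `[-1, 1]`, so
`(1/N) log Z_N` tends to the maximum of `Φ - g`. -/

open Topology

section LogSumExp

variable {ι : Type*} {s : Finset ι} {a b : ι → ℝ} {c : ℝ}

lemma le_log_sum_exp {i : ι} (hi : i ∈ s) : a i ≤ log (∑ j ∈ s, exp (a j)) := by
  rw [← log_exp (a i)]
  exact log_le_log (exp_pos _) (single_le_sum (fun j _ => (exp_pos (a j)).le) hi)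

lemma log_sum_exp_le_log_sum_exp_add (hs : s.Nonempty) (h : ∀ i ∈ s, a i ≤ b i + c) :
    log (∑ i ∈ s, exp (a i)) ≤ log (∑ i ∈ s, exp (b i)) + c := by
  have hpos : ∀ f : ι → ℝ, 0 < ∑ i ∈ s, exp (f i) := fun f => sum_pos (fun i _ => exp_pos _) hs
  calc log (∑ i ∈ s, exp (a i)) ≤ log (∑ i ∈ s, exp (b i) * exp c) :=
        log_le_log (hpos a) (sum_le_sum fun i hi => by rw [← exp_add]; exact exp_le_exp.2 (h i hi))
    _ = log (∑ i ∈ s, exp (b i)) + c := by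
        rw [← sum_mul, log_mul (hpos b).ne' (exp_pos c).ne', log_exp]

lemma log_sum_exp_le_log_card_add (hs : s.Nonempty) (h : ∀ i ∈ s, a i ≤ c) :
    log (∑ i ∈ s, exp (a i)) ≤ log #s + c := by
  simpa using log_sum_exp_le_log_sum_exp_add (b := 0) hs (by simpa using h)

lemma abs_log_sum_exp_sub_log_sum_exp_le (hs : s.Nonempty) (h : ∀ i ∈ s, |a i - b i| ≤ c) :
    |log (∑ i ∈ s, exp (a i)) - log (∑ i ∈ s, exp (b i))| ≤ c := by
  have hab := log_sum_exp_le_log_sum_exp_add (a := a) (b := b) hs fun i hi => by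
    linarith [abs_le.1 (h i hi)]
  have hba := log_sum_exp_le_log_sum_exp_add (a := b) (b := a) hs fun i hi => by
    linarith [abs_le.1 (h i hi)]
  exact abs_sub_le_iff.2 ⟨by linarith, by linarith⟩

end LogSumExp

lemma grid_mem_Icc {N k : ℕ} (hk : k ≤ N) : (2 * k - N) / (N : ℝ) ∈ Set.Icc (-1 : ℝ) 1 := by
  rcases N.eq_zero_or_pos with rfl | hN
  · simp
  have hN' : (0 : ℝ) < N := by exact_mod_cast hN
  have hk' : (k : ℝ) ≤ N := by exact_mod_cast hk
  constructor
  · rw [le_div_iff₀ hN']; linarith [k.cast_nonneg (α := ℝ)]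
  · rw [div_le_one hN']; linarith

lemma exists_grid_near (N : ℕ) {m : ℝ} (hm : m ∈ Set.Icc (-1 : ℝ) 1) :
    ∃ k ≤ N, |2 * k - N - N * m| ≤ 2 := by
  have hx : 0 ≤ N * ((1 + m) / 2) := mul_nonneg N.cast_nonneg (by linarith [hm.1])
  refine ⟨⌊N * ((1 + m) / 2)⌋₊, Nat.floor_le_of_le (by nlinarith [hm.2]), abs_le.2 ⟨?_, ?_⟩⟩
  · linarith [Nat.lt_floor_add_one (N * ((1 + m) / 2))]
  · linarith [Nat.floor_le hx]

lemma tendsto_grid {m : ℝ} {k : ℕ → ℕ} (hk : ∀ N, |2 * k N - N - N * m| ≤ 2) :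
    Tendsto (fun N : ℕ => (2 * k N - N) / (N : ℝ)) atTop (𝓝 m) := by
  rw [tendsto_iff_norm_sub_tendsto_zero]
  refine squeeze_zero' (Eventually.of_forall fun N => norm_nonneg _) ?_
    (tendsto_const_div_atTop_nhds_zero_nat 2)
  filter_upwards [eventually_gt_atTop 0] with N hN
  have hN' : (0 : ℝ) < N := by exact_mod_cast hN
  have hsub : (2 * k N - N) / (N : ℝ) - m = (2 * k N - N - N * m) / N := by field_simp
  rw [hsub, Real.norm_eq_abs, abs_div, abs_of_pos hN']
  exact div_le_div_of_nonneg_right (hk N) hN'.le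

/-- Laplace's principle on the grid `{(2k - N)/N : k ≤ N}` of `[-1, 1]`. -/
theorem tendsto_inv_mul_log_sum_exp_grid {F : ℝ → ℝ} (hF : ContinuousOn F (Set.Icc (-1) 1))
    {a : ℕ → ℕ → ℝ} {e : ℕ → ℝ} (he : Tendsto e atTop (𝓝 0))
    (ha : ∀ᶠ N in atTop, ∀ k ≤ N, |a N k - N * F ((2 * k - N) / N)| ≤ N * e N) :
    Tendsto (fun N : ℕ => (1 / (N : ℝ)) * log (∑ k ∈ range (N + 1), exp (a N k))) atTop
      (𝓝 (⨆ m : Set.Icc (-1 : ℝ) 1, F m)) := by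
  obtain ⟨m₀, hm₀, hmax⟩ :=
    isCompact_Icc.exists_isMaxOn (Set.nonempty_Icc.2 (by norm_num)) hF
  rw [hmax.iSup_eq hm₀]
  choose k hkN hk using fun N => exists_grid_near N hm₀
  have hFk : Tendsto (fun N => F ((2 * k N - N) / N)) atTop (𝓝 (F m₀)) :=
    (hF m₀ hm₀).tendsto.comp <| tendsto_nhdsWithin_iff.2
      ⟨tendsto_grid hk, Eventually.of_forall fun N => grid_mem_Icc (hkN N)⟩
  have hlog : Tendsto (fun N : ℕ => (1 / (N : ℝ)) * log (N + 1)) atTop (𝓝 0) := by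
    have := (tendsto_pow_log_div_mul_add_atTop 1 (-1) 1 one_ne_zero).comp
      (tendsto_atTop_add_const_right _ (1 : ℝ) tendsto_natCast_atTop_atTop)
    simpa [Function.comp_def, div_eq_inv_mul] using this
  refine tendsto_of_tendsto_of_tendsto_of_le_of_le' (by simpa using hFk.sub he)
    (by simpa using (tendsto_const_nhds (x := F m₀)).add (he.add hlog)) ?_ ?_
  · filter_upwards [ha, eventually_gt_atTop 0] with N haN hN
    have hN' : (0 : ℝ) < N := by exact_mod_cast hN
    have hterm := le_log_sum_exp (a := a N) (mem_range.2 (Nat.lt_succ_of_le (hkN N)))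
    rw [one_div, le_inv_mul_iff₀ hN']
    linarith [abs_le.1 (haN (k N) (hkN N))]
  · filter_upwards [ha, eventually_gt_atTop 0] with N haN hN
    have hN' : (0 : ℝ) < N := by exact_mod_cast hN
    have hsum := log_sum_exp_le_log_card_add (s := range (N + 1)) (a := a N)
      (c := N * (F m₀ + e N)) nonempty_range_add_one fun j hj => by
        have hjN := mem_range_succ_iff.1 hj
        have hFj := mul_le_mul_of_nonneg_left (hmax (grid_mem_Icc hjN)) hN'.le
        linarith [abs_le.1 (haN j hjN)]
    rw [card_range, Nat.cast_add_one] at hsum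
    rw [one_div, inv_mul_le_iff₀ hN']
    field_simp
    linarith

lemma mul_log_sub_le_log_factorial (n : ℕ) : n * log n - n ≤ log n.factorial := by
  rcases n.eq_zero_or_pos with rfl | hn
  · simp
  have h := pow_div_factorial_le_exp (n : ℝ) n.cast_nonneg n
  rw [div_le_iff₀ (by positivity)] at h
  have := log_le_log (by positivity) h
  rw [log_pow, log_mul (exp_pos _).ne' (by positivity), log_exp] at this
  linarith

lemma log_factorial_le (n : ℕ) : log n.factorial ≤ n * log n - n + log n / 2 + 1 := by
  rcases n.eq_zero_or_pos with rfl | hn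
  · simp
  obtain ⟨m, rfl⟩ : ∃ m, n = m + 1 := ⟨n - 1, by omega⟩
  -- the Stirling sequence `n! / (√(2n) (n/e)^n)` is antitone, hence at most its first term `e/√2`
  have h := Stirling.log_stirlingSeq'_antitone (Nat.zero_le m)
  simp only [Function.comp_apply, Nat.succ_eq_add_one, zero_add, Stirling.stirlingSeq_one,
    Stirling.log_stirlingSeq_formula] at h
  rw [log_div (exp_pos 1).ne' (by positivity), log_exp, log_sqrt (by norm_num),
    log_mul two_ne_zero (by positivity), log_div (by positivity) (exp_pos 1).ne', log_exp] at h
  linarith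

lemma log_natCast_le_log_natCast {k N : ℕ} (h : k ≤ N) : log k ≤ log N := by
  rcases k.eq_zero_or_pos with rfl | hk
  · simpa using log_natCast_nonneg N
  · exact log_le_log (by exact_mod_cast hk) (by exact_mod_cast h)

lemma abs_log_choose_sub_le {N k : ℕ} (hk : k ≤ N) :
    |log (N.choose k) - (N * log N - k * log k - (N - k) * log (N - k))| ≤ log N + 2 := by
  have hsub : ((N - k : ℕ) : ℝ) = N - k := Nat.cast_sub hk
  have hchoose : log (N.choose k) =
      log N.factorial - log k.factorial - log (N - k).factorial := by
    rw [Nat.cast_choose ℝ hk, log_div (by positivity) (by positivity),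
      log_mul (by positivity) (by positivity)]
    ring
  have hN := mul_log_sub_le_log_factorial N
  have hN' := log_factorial_le N
  have hk₁ := mul_log_sub_le_log_factorial k
  have hk₂ := log_factorial_le k
  have hNk₁ := mul_log_sub_le_log_factorial (N - k)
  have hNk₂ := log_factorial_le (N - k)
  have hlogk := log_natCast_le_log_natCast hk
  have hlogNk := log_natCast_le_log_natCast (Nat.sub_le N k)
  rw [hsub] at hNk₁ hNk₂ hlogNk
  rw [hchoose, abs_le]
  constructor <;> linarith [log_natCast_nonneg N]

lemma mul_gEntropy_grid {N k : ℕ} (hk : k ≤ N) :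
    N * gEntropy ((2 * k - N) / N) = k * log k + (N - k) * log (N - k) - N * log N := by
  rcases N.eq_zero_or_pos with rfl | hN
  · simp [Nat.le_zero.1 hk]
  have hN' : (N : ℝ) ≠ 0 := by positivity
  have hterm (x : ℝ) : N * (x / N * log (x / N)) = x * log x - x * log N := by
    rcases eq_or_ne x 0 with rfl | hx
    · simp
    · rw [log_div hx hN']; field_simp
  have h₁ : (1 - (2 * k - N) / N) / 2 = ((N : ℝ) - k) / N := by field_simp; ring
  have h₂ : (1 + (2 * k - N) / N) / 2 = (k : ℝ) / N := by field_simp; ring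
  rw [gEntropy, h₁, h₂, mul_add, hterm, hterm]
  ring

lemma abs_log_choose_add_mul_gEntropy_le {N k : ℕ} (hk : k ≤ N) :
    |log (N.choose k) + N * gEntropy ((2 * k - N) / N)| ≤ log N + 2 := by
  rw [mul_gEntropy_grid hk]
  convert abs_log_choose_sub_le hk using 2
  ring

lemma abs_spin (b : Bool) : |spin b| = 1 := by
  cases b <;> simp [spin]

lemma abs_sum_spin_le {ι : Type*} (s : Finset ι) (σ : ι → Bool) :
    |∑ i ∈ s, spin (σ i)| ≤ #s := by
  simpa [abs_spin] using abs_sum_le_sum_abs (fun i => spin (σ i)) s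

lemma sum_spin_eq {α : Type*} [Fintype α] (σ : α → Bool) :
    ∑ i, spin (σ i) = 2 * #{i | σ i = true} - Fintype.card α := by
  have h (b : Bool) : spin b = 2 * (if b = true then 1 else 0) - 1 := by
    cases b <;> norm_num [spin]
  simp only [h, sum_sub_distrib, ← mul_sum, sum_boole, sum_const, card_univ, nsmul_eq_mul,
    mul_one]

lemma sum_apply_card_filter {α M : Type*} [Fintype α] [DecidableEq α] [AddCommMonoid M]
    (f : ℕ → M) :
    ∑ σ : α → Bool, f #{i | σ i = true} =
      ∑ k ∈ range (Fintype.card α + 1), (Fintype.card α).choose k • f k := by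
  let e : (α → Bool) ≃ Finset α :=
    { toFun σ := {i | σ i = true}
      invFun s i := decide (i ∈ s)
      left_inv σ := by ext i; simp
      right_inv s := by ext i; simp }
  rw [← card_univ, ← sum_powerset_apply_card, powerset_univ]
  exact e.sum_comp (fun s => f #s)

noncomputable def magnetization {N : ℕ} (σ : Fin N → Bool) : ℝ := (1 / (N : ℝ)) * ∑ i, spin (σ i)

lemma magnetization_eq {N : ℕ} (σ : Fin N → Bool) :
    magnetization σ = (2 * #{i | σ i = true} - N) / N := by
  rw [magnetization, sum_spin_eq, Fintype.card_fin, one_div_mul_eq_div]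

lemma natCast_mul_magnetization {N : ℕ} (σ : Fin N → Bool) :
    N * magnetization σ = ∑ i, spin (σ i) := by
  rcases N.eq_zero_or_pos with rfl | hN
  · simp
  · rw [magnetization, ← mul_assoc, mul_one_div_cancel (by positivity), one_mul]

lemma inv_mul_sum_spin_mem_Icc {N : ℕ} {ι : Type*} {s : Finset ι} (hs : #s ≤ N) (σ : ι → Bool) :
    (1 / (N : ℝ)) * ∑ i ∈ s, spin (σ i) ∈ Set.Icc (-1 : ℝ) 1 := by
  rw [Set.mem_Icc, ← abs_le, abs_mul, abs_of_nonneg (by positivity)]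
  rcases N.eq_zero_or_pos with rfl | hN
  · simp
  · rw [one_div, inv_mul_le_one₀ (by positivity)]
    exact (abs_sum_spin_le s σ).trans (by exact_mod_cast hs)

lemma sum_comp_magnetization {N : ℕ} (f : ℝ → ℝ) :
    ∑ σ : Fin N → Bool, f (magnetization σ) =
      ∑ k ∈ range (N + 1), N.choose k * f ((2 * k - N) / N) := by
  simp only [magnetization_eq]
  simpa using sum_apply_card_filter (α := Fin N) fun k => f ((2 * k - N) / N)

section Hamiltonian

variable {N : ℕ} {U : ℝ → ℝ} {h ω : ℝ}

lemma magnetization_mem_Icc (σ : Fin N → Bool) : magnetization σ ∈ Set.Icc (-1 : ℝ) 1 :=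
  inv_mul_sum_spin_mem_Icc (by simp) σ

lemma abs_cavity_sub_magnetization (σ : Fin N → Bool) (i : Fin N) :
    |(1 / (N : ℝ)) * ∑ j ∈ univ.erase i, spin (σ j) - magnetization σ| = 1 / N := by
  rw [sum_erase_eq_sub (mem_univ i), magnetization, ← mul_sub, sub_sub_cancel_left, abs_mul,
    abs_neg, abs_spin, mul_one, abs_of_nonneg (by positivity)]

lemma abs_hamFC_add_le
    (hω : ∀ x ∈ Set.Icc (-1 : ℝ) 1, ∀ y ∈ Set.Icc (-1 : ℝ) 1, |x - y| ≤ 1 / N → |U x - U y| ≤ ω)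
    (σ : Fin N → Bool) :
    |hamFC U h σ + N * (magnetization σ * U (magnetization σ) + h * magnetization σ)| ≤ N * ω := by
  set m := magnetization σ
  set cavity := fun i => (1 / (N : ℝ)) * ∑ j ∈ univ.erase i, spin (σ j)
  have key : hamFC U h σ + N * (m * U m + h * m) = -∑ i, spin (σ i) * (U (cavity i) - U m) := by
    simp only [hamFC, cavity, mul_sub, sum_sub_distrib, ← sum_mul]
    linear_combination (U m + h) * natCast_mul_magnetization σ
  have hterm (i : Fin N) : |spin (σ i) * (U (cavity i) - U m)| ≤ ω := by
    rw [abs_mul, abs_spin, one_mul]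
    exact hω _ (inv_mul_sum_spin_mem_Icc (by simp) σ) _ (magnetization_mem_Icc σ)
      (abs_cavity_sub_magnetization σ i).le
  rw [key, abs_neg]
  simpa using (abs_sum_le_sum_abs _ univ).trans (sum_le_sum fun i _ => hterm i)

end Hamiltonian

lemma continuous_gEntropy : Continuous gEntropy :=
  (continuous_mul_log.comp (by fun_prop)).add (continuous_mul_log.comp (by fun_prop))

theorem tendsto_inv_mul_log_sum_exp_meanField {Φ : ℝ → ℝ}
    (hΦ : ContinuousOn Φ (Set.Icc (-1) 1)) :
    Tendsto (fun N : ℕ => (1 / (N : ℝ)) *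
        log (∑ σ : Fin N → Bool, exp (N * Φ (magnetization σ))))
      atTop (𝓝 (⨆ m : Set.Icc (-1 : ℝ) 1, (Φ m - gEntropy m))) := by
  have hsum (N : ℕ) : ∑ σ : Fin N → Bool, exp (N * Φ (magnetization σ)) =
      ∑ k ∈ range (N + 1), exp (log (N.choose k) + N * Φ ((2 * k - N) / N)) := by
    rw [sum_comp_magnetization (fun m => exp (N * Φ m))]
    refine sum_congr rfl fun k hk => ?_
    rw [exp_add, exp_log (by exact_mod_cast Nat.choose_pos (mem_range_succ_iff.1 hk))]
  simp only [hsum]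
  refine tendsto_inv_mul_log_sum_exp_grid (hΦ.sub continuous_gEntropy.continuousOn)
    (e := fun N => (log N + 2) / N) ?_ ?_
  · have := ((tendsto_pow_log_div_mul_add_atTop 1 0 1 one_ne_zero).comp
      tendsto_natCast_atTop_atTop).add (tendsto_const_div_atTop_nhds_zero_nat (2 : ℝ))
    simpa [Function.comp_def, add_div] using this
  · filter_upwards [eventually_gt_atTop 0] with N hN k hk
    rw [mul_div_cancel₀ _ (by positivity)]
    convert abs_log_choose_add_mul_gEntropy_le hk using 2
    simp only [Pi.sub_apply]
    ring

theorem tendsto_inv_mul_log_partition_sub_meanField {U : ℝ → ℝ}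
    (hU : ContinuousOn U (Set.Icc (-1) 1)) (β h : ℝ) :
    Tendsto (fun N : ℕ => (1 / (N : ℝ)) *
        (log (∑ σ : Fin N → Bool, exp (-β * hamFC U h σ)) -
          log (∑ σ : Fin N → Bool, exp (N * (β * magnetization σ * U (magnetization σ) +
            β * h * magnetization σ)))))
      atTop (𝓝 0) := by
  rw [Metric.tendsto_nhds]
  intro ε hε
  set ω := ε / (|β| + 1) with ω_def
  obtain ⟨δ, hδ, hUδ⟩ := Metric.uniformContinuousOn_iff.1
    (isCompact_Icc.uniformContinuousOn_of_continuous hU) ω (by positivity)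
  filter_upwards [eventually_gt_atTop 0,
    tendsto_one_div_atTop_nhds_zero_nat.eventually_lt_const hδ] with N hN hNδ
  have hω : ∀ x ∈ Set.Icc (-1 : ℝ) 1, ∀ y ∈ Set.Icc (-1 : ℝ) 1,
      |x - y| ≤ 1 / N → |U x - U y| ≤ ω := fun x hx y hy hxy => by
    simpa only [Real.dist_eq] using (hUδ x hx y hy (by rw [Real.dist_eq]; linarith)).le
  have hσ (σ : Fin N → Bool) : |-β * hamFC U h σ - N * (β * magnetization σ *
      U (magnetization σ) + β * h * magnetization σ)| ≤ |β| * (N * ω) := by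
    rw [show ∀ x y : ℝ, -β * x - N * (β * y * U y + β * h * y) = -β * (x + N * (y * U y + h * y))
      from fun x y => by ring, abs_mul, abs_neg]
    exact mul_le_mul_of_nonneg_left (abs_hamFC_add_le hω σ) (abs_nonneg β)
  have hN' : (0 : ℝ) < N := by exact_mod_cast hN
  rw [dist_zero_right, Real.norm_eq_abs, abs_mul, abs_of_pos (by positivity : (0 : ℝ) < 1 / N)]
  calc 1 / N * |_| ≤ 1 / N * (|β| * (N * ω)) := by
        gcongr
        exact abs_log_sum_exp_sub_log_sum_exp_le univ_nonempty fun σ _ => hσ σ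
    _ = |β| / (|β| + 1) * ε := by rw [ω_def]; field_simp
    _ < ε := mul_lt_of_lt_one_left hε ((div_lt_one (by positivity)).2 (by linarith))

theorem general_fully_connected_free_energy
    (U : ℝ → ℝ) (hU : ContinuousOn U (Set.Icc (-1 : ℝ) 1))
    (β h : ℝ) :
    Tendsto
      (fun N : ℕ => (1 / (N : ℝ)) * Real.log
        (∑ σ : Fin N → Bool, Real.exp (-β * hamFC U h σ)))
      atTop
      (nhds (⨆ m : Set.Icc (-1 : ℝ) 1,
        (β * (m : ℝ) * U m + β * h * (m : ℝ) - gEntropy m))) := by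
  have hΦ : ContinuousOn (fun m => β * m * U m + β * h * m) (Set.Icc (-1) 1) := by fun_prop
  simpa only [zero_add, mul_sub, sub_add_cancel] using
    (tendsto_inv_mul_log_partition_sub_meanField hU β h).add
      (tendsto_inv_mul_log_sum_exp_meanField hΦ)
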